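/- Let Y be a scheme, Z ↪ Y a closed immersion defined by a quasi-coherent ideal ℐ ⊆ 𝒪_Y, and C_Z Y = Spec(⊕_{m∈ℤ} ℐ^m/ℐ^{m+1}) the normal cone (with ℐ^m = 𝒪_Y for m ≤ 0). For a quasi-coherent ideal 𝒦 ⊆ 𝒪_Y defining a closed subscheme W ↪ Y, let 𝒦̂ = ⊕_{m∈ℤ} (𝒦ℐ^m + ℐ^{m+1})/ℐ^{m+1} be the corresponding ideal of 𝒪_{C_Z Y}, so that C_Z Y|_{W×_Y Z} is the closed subscheme defined by 𝒦̂. Then for quasi-coherent ideals 𝒦, ℒ ⊆ 𝒪_Y one has (𝒦·ℒ)^ = 𝒦̂·ℒ̂, and in particular for every n ≥ 1, (𝒦̂)ⁿ = ⊕_{m∈ℤ} (𝒦ⁿℐ^m + ℐ^{m+1})/ℐ^{m+1}. -/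

import Mathlib

/-!
We work in the affine model `Y = Spec R`: the degree-`m` piece of `𝒦̂` is the image of
`K I^m + I^{m+1}` in `I^m / I^{m+1}`, so identities between graded pieces become identities
between ideals of `R` containing `I^{m+1}`, and a product of graded ideals is, in degree `m`,
the sum over all decompositions of `m`.

The pieces `K I^a + I^{a+1}` are multiplicative modulo higher powers of `I`: expanding
`(K I^a + I^{a+1}) (L I^b + I^{b+1})`, every term except `K L I^{a+b}` lies in `I^{a+b+1}`.
Conversely `K L I^m` is already the product of the degree-`0` piece of `K̂` (which contains `K`)
with the degree-`m` piece of `L̂`, and likewise `Kⁿ I^m` is a product of degree-`0` pieces and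
one degree-`m` piece.
-/

noncomputable section

/-- power of an ideal with integer exponent, with the convention `I^m = R` for `m ≤ 0`. -/
def Ideal.zpowNC {R : Type} [CommRing R] (I : Ideal R) (m : ℤ) : Ideal R := I ^ m.toNat

namespace Ideal

variable {R : Type} [CommRing R] (I : Ideal R)

theorem zpowNC_zero : I.zpowNC 0 = ⊤ := by
  simp [zpowNC, one_eq_top]

theorem zpowNC_antitone : Antitone I.zpowNC :=
  fun _ _ h => pow_le_pow_right (Int.toNat_le_toNat h)

theorem zpowNC_mul_le (a b : ℤ) : I.zpowNC a * I.zpowNC b ≤ I.zpowNC (a + b) := by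
  rw [zpowNC, zpowNC, zpowNC, ← pow_add]
  exact pow_le_pow_right (by omega)

/-- The degree-`a` piece `(K I^a + I^{a+1}) / I^{a+1}` of `K̂`, lifted to `R`. -/
abbrev normalConeHat (K : Ideal R) (a : ℤ) : Ideal R :=
  K * I.zpowNC a + I.zpowNC (a + 1)

theorem normalConeHat_le_zpowNC (K : Ideal R) (a : ℤ) : I.normalConeHat K a ≤ I.zpowNC a :=
  sup_le mul_le_right (I.zpowNC_antitone (by omega))

theorem normalConeHat_mul_le (K L : Ideal R) (a b : ℤ) :
    I.normalConeHat K a * I.normalConeHat L b ≤ I.normalConeHat (K * L) (a + b) := by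
  rw [normalConeHat, add_mul, mul_add]
  refine sup_le (sup_le (le_sup_of_le_left ?_) (le_sup_of_le_right ?_)) (le_sup_of_le_right ?_)
  · calc K * I.zpowNC a * (L * I.zpowNC b) = K * L * (I.zpowNC a * I.zpowNC b) := by ring
      _ ≤ K * L * I.zpowNC (a + b) := mul_mono_right (I.zpowNC_mul_le a b)
  · calc K * I.zpowNC a * I.zpowNC (b + 1) ≤ I.zpowNC a * I.zpowNC (b + 1) :=
          mul_mono_left mul_le_right
      _ ≤ I.zpowNC (a + b + 1) := (I.zpowNC_mul_le _ _).trans_eq (by ring_nf)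
  · calc I.zpowNC (a + 1) * I.normalConeHat L b ≤ I.zpowNC (a + 1) * I.zpowNC b :=
          mul_mono_right (I.normalConeHat_le_zpowNC L b)
      _ ≤ I.zpowNC (a + b + 1) := (I.zpowNC_mul_le _ _).trans_eq (by ring_nf)

theorem prod_normalConeHat_le {ι : Type*} (s : Finset ι) (K : ι → Ideal R) (a : ι → ℤ) :
    ∏ i ∈ s, I.normalConeHat (K i) (a i) ≤ I.normalConeHat (∏ i ∈ s, K i) (∑ i ∈ s, a i) := by
  classical
  induction s using Finset.induction with
  | empty => simp [zpowNC_zero, one_eq_top]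
  | insert i s hi ih =>
    rw [Finset.prod_insert hi, Finset.prod_insert hi, Finset.sum_insert hi]
    exact (mul_mono_right ih).trans (I.normalConeHat_mul_le _ _ _ _)

end Ideal

open Ideal

/-- **Products of ideals on the normal cone** (Remark 1.5 of the paper).  For ideals
`I, K, L` of a commutative ring `R`:
(1) `(K·L)^ = K̂·L̂` — in degree `m`, the component of `K̂·L̂` is
`Σ_{a+b=m} K̂_a·L̂_b` and this agrees with the image of `K·L·I^m` modulo `I^{m+1}`;
(2) in particular `(K̂)ⁿ = ⊕_m (Kⁿ I^m + I^{m+1})/I^{m+1}` for all `n ≥ 1`: in degree `m`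
the component `Σ_{a₁+⋯+aₙ=m} K̂_{a₁}⋯K̂_{aₙ}` agrees with the image of `Kⁿ·I^m` modulo
`I^{m+1}`. -/
theorem normalCone_hat_ideal_mul
    {R : Type} [CommRing R] (I K L : Ideal R) :
    -- (1) `(K·L)^ = K̂·L̂`, degreewise modulo `I^{m+1}`:
    (∀ m : ℤ,
      (⨆ a : ℤ, (K * I.zpowNC a + I.zpowNC (a + 1)) *
          (L * I.zpowNC (m - a) + I.zpowNC (m - a + 1))) + I.zpowNC (m + 1)
        = K * L * I.zpowNC m + I.zpowNC (m + 1)) ∧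
    -- (2) `(K̂)ⁿ = ⊕_m (Kⁿ I^m + I^{m+1})/I^{m+1}`, degreewise modulo `I^{m+1}`:
    (∀ (n : ℕ), 1 ≤ n → ∀ m : ℤ,
      (⨆ (a : Fin n → ℤ) (_ : ∑ i, a i = m),
          ∏ i, (K * I.zpowNC (a i) + I.zpowNC (a i + 1))) + I.zpowNC (m + 1)
        = K ^ n * I.zpowNC m + I.zpowNC (m + 1)) := by
  refine ⟨fun m => sup_congr_right ?_ ?_, fun n hn m => sup_congr_right ?_ ?_⟩
  · refine iSup_le fun a => ?_
    have h := I.normalConeHat_mul_le K L a (m - a)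
    rwa [add_sub_cancel] at h
  · have hsplit : K * L * I.zpowNC m = K * I.zpowNC 0 * (L * I.zpowNC (m - 0)) := by
      rw [zpowNC_zero, mul_top, sub_zero, mul_assoc]
    rw [hsplit]
    exact le_sup_of_le_left (le_iSup_of_le 0 (mul_mono le_sup_left le_sup_left))
  · refine iSup₂_le fun a ha => ?_
    have h := I.prod_normalConeHat_le Finset.univ (fun _ => K) a
    rwa [ha, Fin.prod_const] at h
  · classical
    let i₀ : Fin n := ⟨0, hn⟩
    let a₀ : Fin n → ℤ := Pi.single i₀ m
    have hsum : ∑ i, a₀ i = m := by simp [a₀]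
    have hsplit : K ^ n * I.zpowNC m = ∏ i, K * I.zpowNC (a₀ i) := by
      rw [Finset.prod_mul_distrib, Fin.prod_const,
        Fintype.prod_eq_single i₀ fun i hi => by simp [a₀, hi, zpowNC_zero, one_eq_top]]
      simp [a₀]
    rw [hsplit]
    exact le_sup_of_le_left (le_iSup₂_of_le _ hsum (Finset.prod_le_prod' fun _ _ => le_sup_left))
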